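/- Let p, q ∈ (1,∞) and n a nonnegative integer. Then ∫₀^{π_{p,q}/2} sin_{p,q}^{qn+q−1}(t) dt = [n! / ((1/p* + 1)_n)] · p*/q, where p* = p/(p−1). -/

import Mathlib

/-! Substituting `t = arcsin_{p,q} y`, whose derivative is `(1 - y^q)^(-1/p)`, and then `u = y^q`
turns the integral into `q⁻¹ B(n + 1, s)` with `s = 1/p* = 1 - 1/p`, and Euler's Beta integral
gives `B(n + 1, s) = n! / (s)_{n+1} = n! / (s (s + 1)_n)`. -/

open Set MeasureTheory Filter

/-- Generalized arcsine: `arcsin_{p,q}(x) = ∫₀ˣ (1 - tᵠ)^(-1/p) dt`. -/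
noncomputable def gArcsin (p q x : ℝ) : ℝ := ∫ t in (0:ℝ)..x, (1 - t ^ q) ^ (-(1 / p))

/-- Generalized pi: `π_{p,q} = 2 ∫₀¹ (1 - tᵠ)^(-1/p) dt`. -/
noncomputable def gPi (p q : ℝ) : ℝ := 2 * gArcsin p q 1

/-- `S` is the generalized sine `sin_{p,q}` (the inverse of `gArcsin p q` on `[0,1]`). -/
def IsGSin (p q : ℝ) (S : ℝ → ℝ) : Prop :=
  ∀ y ∈ Icc (0:ℝ) 1, S (gArcsin p q y) = y

/-- `C` is the generalized cosine `cos_{p,q}`, the derivative of `S = sin_{p,q}`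
on `[0, π_{p,q}/2]`. -/
def IsGCos (p q : ℝ) (S C : ℝ → ℝ) : Prop :=
  ∀ x ∈ Icc (0:ℝ) (gPi p q / 2), HasDerivWithinAt S (C x) (Icc (0:ℝ) (gPi p q / 2)) x

open intervalIntegral

theorem ascPochhammer_eval_eq_prod_range {R : Type*} [CommSemiring R] (n : ℕ) (r : R) :
    (ascPochhammer R n).eval r = ∏ j ∈ Finset.range n, (r + j) := by
  induction n with
  | zero => simp
  | succ n ih => simp [ascPochhammer_succ_right, ih, Finset.prod_range_succ]

theorem integral_pow_mul_one_sub_rpow (n : ℕ) {s : ℝ} (hs : 0 < s) :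
    ∫ u in (0:ℝ)..1, u ^ n * (1 - u) ^ (s - 1) =
      n.factorial / (ascPochhammer ℝ (n + 1)).eval s := by
  have hbeta : ((∫ u in (0:ℝ)..1, u ^ n * (1 - u) ^ (s - 1) : ℝ) : ℂ) =
      Complex.betaIntegral s (n + 1) := by
    rw [Complex.betaIntegral_symm, Complex.betaIntegral, ← integral_ofReal]
    refine integral_congr fun u hu => ?_
    rw [uIcc_of_le zero_le_one] at hu
    push_cast
    rw [Complex.ofReal_cpow (by linarith [hu.2]), add_sub_cancel_right, Complex.cpow_natCast]
    push_cast
    ring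
  rw [Complex.betaIntegral_eval_nat_add_one_right (by simpa using hs)] at hbeta
  rw [ascPochhammer_eval_eq_prod_range]
  exact_mod_cast hbeta

theorem integral_comp_rpow_mul_deriv (g : ℝ → ℝ) {q : ℝ} (hq : 0 < q) :
    ∫ x in (0:ℝ)..1, g (x ^ q) * (q * x ^ (q - 1)) = ∫ u in (0:ℝ)..1, g u := by
  have h := integral_comp_mul_deriv_of_deriv_nonneg (a := 0) (b := 1) (g := g)
    (f' := fun x => q * x ^ (q - 1))
    (Real.continuous_rpow_const hq.le).continuousOn
    (fun x hx => Real.hasDerivAt_rpow_const (Or.inl (by simpa using hx.1 : 0 < x).ne'))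
    (fun x hx => mul_nonneg hq.le (Real.rpow_nonneg (by simpa using hx.1.le) _))
  simpa [Real.zero_rpow hq.ne'] using h

section GeneralizedArcsin

variable {p q : ℝ}

theorem continuousAt_one_sub_rpow_rpow (hq : 0 < q) {t : ℝ} (ht0 : 0 ≤ t) (ht : t < 1) :
    ContinuousAt (fun t : ℝ => (1 - t ^ q) ^ (-(1 / p))) t := by
  have htq : t ^ q < 1 := Real.rpow_lt_one ht0 ht hq
  exact ContinuousAt.rpow_const (f := fun t : ℝ => 1 - t ^ q)
    (continuousAt_const.sub (Real.continuousAt_rpow_const _ _ (Or.inr hq.le)))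
    (Or.inl (by linarith))

theorem intervalIntegrable_one_sub_rpow_rpow (hp : 1 < p) (hq : 1 ≤ q) :
    IntervalIntegrable (fun t : ℝ => (1 - t ^ q) ^ (-(1 / p))) volume 0 1 := by
  have hp' : 1 / p < 1 := (div_lt_one (by linarith)).2 hp
  have hdom : IntervalIntegrable (fun t : ℝ => (1 - t) ^ (-(1 / p))) volume 0 1 := by
    have := ((intervalIntegrable_rpow' (a := 0) (b := 1) (r := -(1 / p))
      (by linarith)).comp_sub_left 1).symm
    simpa using this
  refine hdom.mono_fun
    ((measurable_const.sub (measurable_id.pow_const q)).pow_const _).aestronglyMeasurable ?_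
  filter_upwards [ae_restrict_mem measurableSet_uIoc] with t ht
  rw [uIoc_of_le zero_le_one] at ht
  have htq : t ^ q ≤ t := by
    simpa using Real.rpow_le_rpow_of_exponent_ge ht.1 ht.2 hq
  rw [Real.norm_of_nonneg (Real.rpow_nonneg (by linarith [ht.2]) _),
    Real.norm_of_nonneg (Real.rpow_nonneg (by linarith [ht.2]) _)]
  rcases ht.2.eq_or_lt with rfl | ht1
  · simp
  · exact Real.rpow_le_rpow_of_nonpos (by linarith) (by linarith)
      (neg_nonpos.2 (one_div_nonneg.2 (by linarith)))

theorem continuousOn_gArcsin (hp : 1 < p) (hq : 1 ≤ q) :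
    ContinuousOn (gArcsin p q) (Icc 0 1) := by
  have hint : IntegrableOn (fun t : ℝ => (1 - t ^ q) ^ (-(1 / p))) (uIcc 0 1) := by
    rw [uIcc_of_le zero_le_one]
    exact (intervalIntegrable_iff_integrableOn_Icc_of_le zero_le_one).1
      (intervalIntegrable_one_sub_rpow_rpow hp hq)
  have h := continuousOn_primitive_interval hint
  rw [uIcc_of_le zero_le_one] at h
  exact h

theorem hasDerivAt_gArcsin (hq : 0 < q) {y : ℝ} (hy : y ∈ Ioo 0 1) :
    HasDerivAt (gArcsin p q) ((1 - y ^ q) ^ (-(1 / p))) y := by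
  have hcont : ∀ t ∈ Ico (0:ℝ) 1, ContinuousAt (fun t : ℝ => (1 - t ^ q) ^ (-(1 / p))) t :=
    fun t ht => continuousAt_one_sub_rpow_rpow hq ht.1 ht.2
  refine integral_hasDerivAt_right ?_ ?_ (hcont y ⟨hy.1.le, hy.2⟩)
  · refine ContinuousOn.intervalIntegrable fun t ht => (hcont t ?_).continuousWithinAt
    rw [uIcc_of_le hy.1.le] at ht
    exact ⟨ht.1, ht.2.trans_lt hy.2⟩
  · exact ContinuousAt.stronglyMeasurableAtFilter isOpen_Ioo
      (fun t ht => hcont t ⟨ht.1.le, ht.2⟩) y hy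

theorem integral_comp_gSin (hp : 1 < p) (hq : 1 ≤ q) {S : ℝ → ℝ} (hS : IsGSin p q S)
    (g : ℝ → ℝ) :
    ∫ t in (0:ℝ)..(gPi p q / 2), g (S t) =
      ∫ y in (0:ℝ)..1, g y * (1 - y ^ q) ^ (-(1 / p)) := by
  have hsubst := integral_comp_mul_deriv_of_deriv_nonneg (a := 0) (b := 1) (g := fun t => g (S t))
    (by simpa [uIcc_of_le zero_le_one] using continuousOn_gArcsin hp hq)
    (fun y hy => hasDerivAt_gArcsin (by linarith) (by simpa using hy))
    (fun y hy => Real.rpow_nonneg (sub_nonneg.2 (Real.rpow_le_one (by simpa using hy.1.le)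
      (by simpa using hy.2.le) (by linarith))) _)
  rw [show gArcsin p q 0 = 0 from integral_same, show gArcsin p q 1 = gPi p q / 2 by
    rw [gPi]; ring] at hsubst
  rw [← hsubst]
  refine integral_congr fun y hy => ?_
  rw [uIcc_of_le zero_le_one] at hy
  simp [hS y hy]

end GeneralizedArcsin

/-- Corollary 3.5, third formula:
`∫₀^{π_{p,q}/2} sin_{p,q}^{qn+q-1} t dt = (1)ₙ/((1/p* + 1)ₙ) · p*/q`, where `(1)ₙ = n!`. -/
theorem stmt_12 (p q : ℝ) (n : ℕ) (hp : 1 < p) (hq : 1 < q)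
    (S : ℝ → ℝ) (hS : IsGSin p q S) :
    ∫ t in (0:ℝ)..(gPi p q / 2), S t ^ (q * (n : ℝ) + q - 1) =
      (Nat.factorial n : ℝ) /
          (ascPochhammer ℝ n).eval (1 / (p / (p - 1)) + 1) *
        (p / (p - 1) / q) := by
  set s := 1 / (p / (p - 1)) with hs_def
  have hp1 : 0 < p - 1 := by linarith
  have hs : 0 < s := by positivity
  have hs1 : s - 1 = -(1 / p) := by
    rw [hs_def]; field_simp; ring
  have hpow : ∀ y ∈ uIcc (0:ℝ) 1, y ^ (q * n + q - 1) * (1 - y ^ q) ^ (-(1 / p)) =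
      q⁻¹ * ((y ^ q) ^ n * (1 - y ^ q) ^ (s - 1) * (q * y ^ (q - 1))) := by
    intro y hy
    rw [uIcc_of_le zero_le_one] at hy
    rw [hs1, ← Real.rpow_mul_natCast hy.1, show q * n + q - 1 = q * n + (q - 1) by ring,
      Real.rpow_add' hy.1 (by positivity)]
    field_simp
  rw [integral_comp_gSin hp hq.le hS (· ^ (q * (n : ℝ) + q - 1)), integral_congr hpow,
    intervalIntegral.integral_const_mul,
    integral_comp_rpow_mul_deriv (fun u => u ^ n * (1 - u) ^ (s - 1)) (by linarith),
    integral_pow_mul_one_sub_rpow n hs, ascPochhammer_succ_left]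
  simp only [Polynomial.eval_mul, Polynomial.eval_X, Polynomial.eval_comp, Polynomial.eval_add,
    Polynomial.eval_one]
  rw [hs_def]
  field_simp
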